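/- arXiv:1909.05229 — 5 statements merged into one kernel-verified Lean document; each statement's English description precedes it below -/
import Mathlib

section
/- Let 𝔐 ⊆ ℝ^m and suppose 𝔐 is a C² submanifold of ℝ^m of dimension 𝔯 in a neighborhood of a point x₀ ∈ 𝔐. Then there exists an open neighborhood W of x₀ such that: whenever ŷ ∈ W and x̂ ∈ W ∩ 𝔐 satisfy the stationarity condition ŷ − x̂ ⟂ T_𝔐(x̂) (the tangent space to 𝔐 at x̂), the point x̂ is the unique global minimizer of ‖ŷ − x‖₂² over x ∈ 𝔐. -/
/-!
Near `x₀` the derivative `Dφ` is `K`-Lipschitz, so for two points `x, x̂` of the zero set Taylor's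
formula gives `‖Dφ(x̂) (x - x̂)‖ ≤ K ‖x - x̂‖²`. Stationarity puts `ŷ - x̂` in
`(ker Dφ(x̂))ᗮ = range Dφ(x̂)†`, say `ŷ - x̂ = Dφ(x̂)† w`. Surjectivity of `Dφ(x₀)` makes `Dφ(x₀)†`
injective, hence bounded below, and this lower bound survives the perturbation to `Dφ(x̂)†`:
`‖w‖ ≤ 2C ‖ŷ - x̂‖`. Thus `⟪ŷ - x̂, x - x̂⟫ = ⟪w, Dφ(x̂) (x - x̂)⟫ ≤ 2CK ‖ŷ - x̂‖ ‖x - x̂‖²`,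
which is below `‖x - x̂‖² / 2` when `ŷ, x̂` are close to `x₀`, and expanding `‖ŷ - x‖²` gives
the claim. Points `x` far from `x₀` are farther from `ŷ` than `x̂` by the triangle inequality.
-/

open Metric ContinuousLinearMap
open scoped RealInnerProductSpace InnerProduct

section Adjoint

variable {𝕜 E F : Type*} [RCLike 𝕜] [NormedAddCommGroup E] [InnerProductSpace 𝕜 E]
  [CompleteSpace E] [NormedAddCommGroup F] [InnerProductSpace 𝕜 F] [CompleteSpace F]

theorem ContinuousLinearMap.injective_adjoint_of_surjective {A : E →L[𝕜] F}
    (hA : Function.Surjective A) : Function.Injective (A†) := by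
  refine LinearMap.ker_eq_bot.mp ?_
  rw [← orthogonal_range, LinearMap.range_eq_top.mpr hA, Submodule.top_orthogonal_eq_bot]

theorem ContinuousLinearMap.orthogonal_ker_eq_range_adjoint [FiniteDimensional 𝕜 F]
    (A : E →L[𝕜] F) : (LinearMap.ker A.toLinearMap)ᗮ = LinearMap.range (A†).toLinearMap := by
  rw [orthogonal_ker,
    (Submodule.closed_of_finiteDimensional _).submodule_topologicalClosure_eq]

end Adjoint

theorem ContinuousLinearMap.exists_pos_norm_le_mul_norm_apply_of_injective
    {E F : Type*} [NormedAddCommGroup E] [NormedSpace ℝ E] [FiniteDimensional ℝ E]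
    [NormedAddCommGroup F] [NormedSpace ℝ F] {T : E →L[ℝ] F} (hT : Function.Injective T) :
    ∃ C > 0, ∀ w, ‖w‖ ≤ C * ‖T w‖ := by
  obtain ⟨C, hC, hCT⟩ := (T : E →ₗ[ℝ] F).injective_iff_antilipschitz.mp hT
  exact ⟨C, hC, fun w => by simpa using hCT.le_mul_norm_sub w 0⟩

theorem ContinuousLinearMap.norm_le_two_mul_norm_apply_of_norm_sub_le
    {𝕜 E F : Type*} [NontriviallyNormedField 𝕜] [SeminormedAddCommGroup E] [NormedSpace 𝕜 E]
    [SeminormedAddCommGroup F] [NormedSpace 𝕜 F] {T S : E →L[𝕜] F} {C : ℝ} (hC : 0 ≤ C)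
    (hT : ∀ w, ‖w‖ ≤ C * ‖T w‖) (hTS : 2 * C * ‖T - S‖ ≤ 1) (w : E) :
    ‖w‖ ≤ 2 * C * ‖S w‖ := by
  have hTw : ‖T w‖ ≤ ‖S w‖ + ‖T - S‖ * ‖w‖ :=
    calc ‖T w‖ = ‖S w + (T - S) w‖ := by simp
      _ ≤ ‖S w‖ + ‖T - S‖ * ‖w‖ := (norm_add_le _ _).trans (by gcongr; exact (T - S).le_opNorm w)
  nlinarith [hT w, mul_le_mul_of_nonneg_left hTw hC, mul_le_mul_of_nonneg_right hTS (norm_nonneg w)]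

section Calculus

variable {E F : Type*} [NormedAddCommGroup E] [NormedSpace ℝ E] [NormedAddCommGroup F]
  [NormedSpace ℝ F]

theorem ContDiffOn.exists_closedBall_lipschitzOnWith_fderiv {f : E → F} {U : Set E}
    (hf : ContDiffOn ℝ 2 f U) (hU : IsOpen U) {x : E} (hx : x ∈ U) :
    ∃ K, ∃ ρ > 0, closedBall x ρ ⊆ U ∧ LipschitzOnWith K (fderiv ℝ f) (closedBall x ρ) := by
  obtain ⟨K, t, ht, hlip⟩ :=
    ((hf.contDiffAt (hU.mem_nhds hx)).fderiv_right (m := 1) le_rfl).exists_lipschitzOnWith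
  obtain ⟨ρ, hρ, hρUt⟩ := nhds_basis_closedBall.mem_iff.mp (Filter.inter_mem (hU.mem_nhds hx) ht)
  exact ⟨K, ρ, hρ, fun z hz => (hρUt hz).1, hlip.mono fun z hz => (hρUt hz).2⟩

theorem Convex.norm_image_sub_sub_fderiv_le_of_lipschitzOnWith {f : E → F} {s : Set E}
    {K : NNReal} {a b : E} (hs : Convex ℝ s) (hf : ∀ z ∈ s, DifferentiableAt ℝ f z)
    (hlip : LipschitzOnWith K (fderiv ℝ f) s) (ha : a ∈ s) (hb : b ∈ s) :
    ‖f b - f a - fderiv ℝ f a (b - a)‖ ≤ K * ‖b - a‖ ^ 2 := by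
  have hseg : segment ℝ a b ⊆ s := hs.segment_subset ha hb
  have bound : ∀ z ∈ segment ℝ a b, ‖fderiv ℝ f z - fderiv ℝ f a‖ ≤ K * ‖b - a‖ := fun z hz =>
    calc ‖fderiv ℝ f z - fderiv ℝ f a‖ ≤ K * ‖z - a‖ := by
          simpa only [dist_eq_norm] using hlip.dist_le_mul z (hseg hz) a ha
      _ ≤ K * ‖b - a‖ := by gcongr; exact norm_sub_le_of_mem_segment hz
  calc ‖f b - f a - fderiv ℝ f a (b - a)‖ ≤ K * ‖b - a‖ * ‖b - a‖ :=
        (convex_segment a b).norm_image_sub_le_of_norm_fderiv_le' (fun z hz => hf z (hseg hz))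
          bound (left_mem_segment ℝ a b) (right_mem_segment ℝ a b)
    _ = K * ‖b - a‖ ^ 2 := by ring

end Calculus

theorem dist_lt_dist_of_mem_ball_of_notMem_closedBall {α : Type*} [PseudoMetricSpace α]
    {c x y z : α} {r ρ : ℝ} (hy : y ∈ ball c r) (hz : z ∈ ball c r) (hx : x ∉ closedBall c ρ)
    (hrρ : 3 * r ≤ ρ) : dist y z < dist y x := by
  rw [mem_ball] at hy hz
  rw [mem_closedBall, not_le] at hx
  linarith [dist_triangle_right y z c, dist_triangle x y c, dist_comm x y]

theorem sq_norm_sub_lt_of_adjoint_apply_eq {E F : Type*} [NormedAddCommGroup E]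
    [InnerProductSpace ℝ E] [CompleteSpace E] [NormedAddCommGroup F] [InnerProductSpace ℝ F]
    [CompleteSpace F] {A : E →L[ℝ] F} {w : F} {x y z : E} {K : ℝ} (hw : (A†) w = y - z)
    (hA : ‖A (x - z)‖ ≤ K * ‖x - z‖ ^ 2) (hwK : 2 * K * ‖w‖ < 1) (hne : x ≠ z) :
    ‖y - z‖ ^ 2 < ‖y - x‖ ^ 2 := by
  have hinner : ⟪y - z, x - z⟫ ≤ K * ‖w‖ * ‖x - z‖ ^ 2 :=
    calc ⟪y - z, x - z⟫ = ⟪w, A (x - z)⟫ := by rw [← hw, adjoint_inner_left]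
      _ ≤ ‖w‖ * ‖A (x - z)‖ := real_inner_le_norm _ _
      _ ≤ ‖w‖ * (K * ‖x - z‖ ^ 2) := by gcongr
      _ = K * ‖w‖ * ‖x - z‖ ^ 2 := by ring
  have hpos : 0 < ‖x - z‖ := norm_pos_iff.mpr (sub_ne_zero.mpr hne)
  rw [show y - x = (y - z) - (x - z) by abel, norm_sub_sq_real (y - z) (x - z)]
  nlinarith [mul_pos (sub_pos.mpr hwK) (pow_pos hpos 2)]

theorem sq_norm_sub_lt_of_mem_orthogonal_ker_fderiv {E F : Type*} [NormedAddCommGroup E]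
    [InnerProductSpace ℝ E] [CompleteSpace E] [NormedAddCommGroup F] [InnerProductSpace ℝ F]
    [FiniteDimensional ℝ F] {φ : E → F} {s : Set E} {K : NNReal} {C : ℝ} {x₀ x y z : E}
    (hs : Convex ℝ s) (hφ : ∀ a ∈ s, DifferentiableAt ℝ φ a)
    (hlip : LipschitzOnWith K (fderiv ℝ φ) s) (hC : 0 ≤ C)
    (hCA₀ : ∀ w, ‖w‖ ≤ C * ‖((fderiv ℝ φ x₀)†) w‖) (hx₀ : x₀ ∈ s) (hx : x ∈ s) (hz : z ∈ s)
    (hφxz : φ x = φ z) (hne : x ≠ z) (horth : y - z ∈ (LinearMap.ker (fderiv ℝ φ z).toLinearMap)ᗮ)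
    (hx₀z : 2 * C * K * ‖x₀ - z‖ ≤ 1) (hyz : 4 * C * K * ‖y - z‖ < 1) :
    ‖y - z‖ ^ 2 < ‖y - x‖ ^ 2 := by
  have htaylor := hs.norm_image_sub_sub_fderiv_le_of_lipschitzOnWith hφ hlip hz hx
  rw [hφxz, sub_self, zero_sub, norm_neg] at htaylor
  obtain ⟨w, hw⟩ := orthogonal_ker_eq_range_adjoint (fderiv ℝ φ z) ▸ horth
  have hA : ‖fderiv ℝ φ x₀ - fderiv ℝ φ z‖ ≤ K * ‖x₀ - z‖ := by
    simpa only [dist_eq_norm] using hlip.dist_le_mul x₀ hx₀ z hz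
  have hwC : ‖w‖ ≤ 2 * C * ‖y - z‖ := by
    rw [← hw]
    refine norm_le_two_mul_norm_apply_of_norm_sub_le hC hCA₀ ?_ w
    rw [← map_sub, LinearIsometryEquiv.norm_map]
    nlinarith [mul_le_mul_of_nonneg_left hA (by positivity : 0 ≤ 2 * C)]
  refine sq_norm_sub_lt_of_adjoint_apply_eq hw htaylor ?_ hne
  nlinarith [mul_le_mul_of_nonneg_left hwC K.coe_nonneg]

theorem stationary_point_is_unique_global_minimizer_general
    {m 𝔯 : ℕ} {M : Set (EuclideanSpace ℝ (Fin m))}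
    {x₀ : EuclideanSpace ℝ (Fin m)}
    {U : Set (EuclideanSpace ℝ (Fin m))}
    {φ : EuclideanSpace ℝ (Fin m) → EuclideanSpace ℝ (Fin (m - 𝔯))}
    (hU : IsOpen U) (hx₀U : x₀ ∈ U)
    (hφ : ContDiffOn ℝ 2 φ U)
    (hsurj : ∀ x ∈ U, Function.Surjective (fderiv ℝ φ x))
    (hMU : M ∩ U = {x ∈ U | φ x = 0}) :
    ∃ W : Set (EuclideanSpace ℝ (Fin m)), IsOpen W ∧ x₀ ∈ W ∧ W ⊆ U ∧
      ∀ yhat ∈ W, ∀ xhat ∈ W ∩ M,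
        (∀ v ∈ LinearMap.ker (fderiv ℝ φ xhat).toLinearMap, ⟪yhat - xhat, v⟫ = 0) →
        ∀ x ∈ M, x ≠ xhat → ‖yhat - xhat‖ ^ 2 < ‖yhat - x‖ ^ 2 := by
  obtain ⟨C, hC, hCA₀⟩ := exists_pos_norm_le_mul_norm_apply_of_injective
    (injective_adjoint_of_surjective (hsurj x₀ hx₀U))
  obtain ⟨K, ρ, hρ, hBU, hlip⟩ := hφ.exists_closedBall_lipschitzOnWith_fderiv hU hx₀U
  -- `3 r ≤ ρ` separates the far points, `8 C K r < 1` gives both smallness conditions below.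
  obtain ⟨r, hr, hrρ, hrCK⟩ : ∃ r > 0, 3 * r ≤ ρ ∧ 8 * C * K * r < 1 := by
    obtain ⟨c, hc, hcCK⟩ := exists_pos_mul_lt one_pos (8 * C * K)
    refine ⟨min c (ρ / 3), by positivity, by linarith [min_le_right c (ρ / 3)], ?_⟩
    exact (mul_le_mul_of_nonneg_left (min_le_left c _) (by positivity)).trans_lt hcCK
  have hball : ball x₀ r ⊆ closedBall x₀ ρ :=
    ball_subset_closedBall.trans (closedBall_subset_closedBall (by linarith))
  have hzero : ∀ z ∈ M ∩ closedBall x₀ ρ, φ z = 0 := fun z hz => (hMU.subset ⟨hz.1, hBU hz.2⟩).2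
  refine ⟨ball x₀ r, isOpen_ball, mem_ball_self hr, hball.trans hBU, ?_⟩
  rintro yhat hy xhat ⟨hxhat, hxhatM⟩ horth x hxM hne
  by_cases hx : x ∈ closedBall x₀ ρ
  · have hx₀xhat : ‖x₀ - xhat‖ < r := by rw [← dist_eq_norm, dist_comm]; exact hxhat
    have hyxhat : ‖yhat - xhat‖ < 2 * r := by
      rw [← dist_eq_norm]
      linarith [dist_triangle_right yhat xhat x₀, mem_ball.mp hy, mem_ball.mp hxhat]
    have hCK : 0 ≤ C * K := by positivity
    refine sq_norm_sub_lt_of_mem_orthogonal_ker_fderiv (convex_closedBall x₀ ρ)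
      (fun a ha => (hφ.differentiableOn two_ne_zero a (hBU ha)).differentiableAt
        (hU.mem_nhds (hBU ha))) hlip hC.le hCA₀ (mem_closedBall_self hρ.le) hx (hball hxhat)
      (by rw [hzero x ⟨hxM, hx⟩, hzero xhat ⟨hxhatM, hball hxhat⟩]) hne
      ((Submodule.mem_orthogonal' _ _).mpr horth) ?_ ?_
    · nlinarith [mul_le_mul_of_nonneg_left hx₀xhat.le hCK]
    · nlinarith [mul_le_mul_of_nonneg_left hyxhat.le hCK]
  · exact pow_lt_pow_left₀ (by simpa only [dist_eq_norm] using
      dist_lt_dist_of_mem_ball_of_notMem_closedBall hy hxhat hx hrρ) (norm_nonneg _) two_ne_zero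

/-- Let `𝔐 ⊆ ℝ^m` be a `C²` submanifold of dimension `𝔯` near `x₀ ∈ 𝔐`,
given locally as the zero set of a `C²` submersion `φ : U → ℝ^{m-𝔯}`, with tangent space
`T_𝔐(x) = ker Dφ(x)`.  Then there is an open neighborhood `W` of `x₀` such that whenever
`yhat ∈ W` and `xhat ∈ W ∩ 𝔐` satisfy `yhat − xhat ⟂ T_𝔐(xhat)`, the point `xhat` is the
unique global minimizer of `‖yhat − x‖₂²` over `x ∈ 𝔐`. -/
theorem stationary_point_is_unique_global_minimizer
    {m 𝔯 : ℕ} {M : Set (EuclideanSpace ℝ (Fin m))}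
    {x₀ : EuclideanSpace ℝ (Fin m)} (hx₀ : x₀ ∈ M)
    {U : Set (EuclideanSpace ℝ (Fin m))}
    {φ : EuclideanSpace ℝ (Fin m) → EuclideanSpace ℝ (Fin (m - 𝔯))}
    (hU : IsOpen U) (hx₀U : x₀ ∈ U)
    (hφ : ContDiffOn ℝ 2 φ U)
    (hsurj : ∀ x ∈ U, Function.Surjective (fderiv ℝ φ x))
    (hMU : M ∩ U = {x ∈ U | φ x = 0}) :
    ∃ W : Set (EuclideanSpace ℝ (Fin m)), IsOpen W ∧ x₀ ∈ W ∧ W ⊆ U ∧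
      ∀ yhat ∈ W, ∀ xhat ∈ W ∩ M,
        (∀ v ∈ LinearMap.ker (fderiv ℝ φ xhat).toLinearMap, ⟪yhat - xhat, v⟫ = 0) →
        ∀ x ∈ M, x ≠ xhat → ‖yhat - xhat‖ ^ 2 < ‖yhat - x‖ ^ 2 :=
  stationary_point_is_unique_global_minimizer_general hU hx₀U hφ hsurj hMU
end

section
/- Let Ξ ⊆ ℝ^d be a nonempty open connected set, let 𝒢 : Ξ → ℝ^m be real analytic with Jacobian 𝒥(ξ) and characteristic rank ρ = max_{ξ∈Ξ} rank 𝒥(ξ), let A be an m×k real matrix of rank k, let ℒ = {Az : z ∈ ℝ^k}, let ℳ = {𝒢(ξ) : ξ ∈ Ξ}, and let 𝔯 be the characteristic rank of the map G(ξ, ζ) = 𝒢(ξ) + Aζ on Ξ × ℝ^k. Then: (i) if there exists a point x ∈ ℳ such that ℳ is a C² submanifold of dimension ρ in a neighborhood of x and T_ℳ(x) ∩ ℒ = {0} (a well-posed point), then 𝔯 = ρ + k; (ii) conversely, if ℳ is a C² submanifold of dimension ρ in a neighborhood of each of its points and 𝔯 = ρ + k, then for almost every ξ ∈ Ξ (with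 respect to Lebesgue measure) the point x = 𝒢(ξ) is well-posed. -/
/-!
The Jacobian of `G(ξ, ζ) = 𝒢(ξ) + Aζ` has range `range 𝒥(ξ) ⊔ ℒ`, so its rank is at most
`ρ + k`, with equality exactly when `rank 𝒥(ξ) = ρ` and `range 𝒥(ξ) ⊓ ℒ = 0`. Where `ℳ` is cut
out by a submersion `φ`, the identity `φ ∘ 𝒢 = 0` gives `range 𝒥(ξ) ≤ T_ℳ(𝒢 ξ)`, with equality
when `rank 𝒥(ξ) = ρ`.

The rank of an analytic family of linear maps drops only on the zero set of an analytic Gram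
determinant, which is null unless the determinant vanishes identically. Nullity comes from
Lebesgue density: at almost every point of a set, a function vanishing on the set has zero
derivative, so at almost every zero of `f` all derivatives of `f` vanish, and the identity
theorem excludes such points.

(i) Transversality `T_ℳ ⊓ ℒ = 0` is an open condition, and arbitrarily close to the well-posed
point there are points where `rank 𝒥 = ρ`; there `range 𝒥 ≤ T_ℳ` meets `ℒ` trivially, so the
rank of the Jacobian of `G` is `ρ + k`.
(ii) If `𝔯 = ρ + k`, then off a null set the Jacobian of `G` has rank `ρ + k`, and each such
`𝒢(ξ)` is well-posed.
-/

open MeasureTheory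

/-- `M` is a `C²` submanifold of `ℝ^m` of dimension `ρ` in a neighborhood of `x`,
witnessed by the open set `U` and the local `C²` submersion `φ : U → ℝ^{m-ρ}`. -/
def SubmanifoldDataAt {m : ℕ} (M : Set (Fin m → ℝ)) (ρ : ℕ) (x : Fin m → ℝ)
    (U : Set (Fin m → ℝ)) (φ : (Fin m → ℝ) → (Fin (m - ρ) → ℝ)) : Prop :=
  IsOpen U ∧ x ∈ U ∧ ContDiffOn ℝ 2 φ U ∧
    (∀ y ∈ U, Function.Surjective (fderiv ℝ φ y)) ∧
    M ∩ U = {y ∈ U | φ y = 0}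

/-- `M` is a `C²` submanifold of dimension `ρ` in a neighborhood of `x`. -/
def IsManifoldAt {m : ℕ} (M : Set (Fin m → ℝ)) (ρ : ℕ) (x : Fin m → ℝ) : Prop :=
  ∃ U φ, SubmanifoldDataAt M ρ x U φ

/-- `x ∈ M` is a well-posed point: `M` is a `C²` submanifold of dimension `ρ` near `x`
and the tangent space `T_M(x) = ker Dφ(x)` meets the linear space `L` only in `0`. -/
def WellPosedAt {m : ℕ} (M : Set (Fin m → ℝ)) (L : Submodule ℝ (Fin m → ℝ))
    (ρ : ℕ) (x : Fin m → ℝ) : Prop :=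
  ∃ U φ, SubmanifoldDataAt M ρ x U φ ∧ LinearMap.ker (fderiv ℝ φ x).toLinearMap ⊓ L = ⊥

/-- The rank of the Jacobian of a map at a point. -/
noncomputable def jRank {E F : Type*} [NormedAddCommGroup E] [NormedSpace ℝ E]
    [NormedAddCommGroup F] [NormedSpace ℝ F] (G : E → F) (θ : E) : ℕ :=
  Module.finrank ℝ (LinearMap.range (fderiv ℝ G θ).toLinearMap)

open Filter Metric Set Module
open scoped Topology

section LinearAlgebra

theorem le_finrank_range_iff_exists_linearIndependent {K V W : Type*} [DivisionRing K]
    [AddCommGroup V] [Module K V] [AddCommGroup W] [Module K W] [FiniteDimensional K W]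
    (f : V →ₗ[K] W) {r : ℕ} :
    r ≤ finrank K (LinearMap.range f) ↔ ∃ v : Fin r → V, LinearIndependent K (f ∘ v) := by
  constructor
  · intro h
    obtain ⟨w, hw⟩ := exists_linearIndependent_of_le_finrank h
    choose v hv using fun i ↦ LinearMap.mem_range.1 (w i).2
    refine ⟨v, ?_⟩
    rw [show f ∘ v = (LinearMap.range f).subtype ∘ w from funext hv]
    exact hw.map' _ (Submodule.ker_subtype _)
  · rintro ⟨v, hv⟩
    have hw : LinearIndependent K fun i ↦ (⟨f (v i), LinearMap.mem_range_self f _⟩ :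
        LinearMap.range f) := LinearIndependent.of_comp (LinearMap.range f).subtype hv
    simpa using hw.fintype_card_le_finrank

theorem finrank_sup_eq_add_iff {K E : Type*} [DivisionRing K] [AddCommGroup E] [Module K E]
    {V W : Submodule K E} [FiniteDimensional K V] [FiniteDimensional K W] {ρ : ℕ}
    (hV : finrank K V ≤ ρ) :
    finrank K ↥(V ⊔ W) = ρ + finrank K W ↔ finrank K V = ρ ∧ V ⊓ W = ⊥ := by
  have := Submodule.finrank_sup_add_finrank_inf_eq V W
  rw [← Submodule.finrank_eq_zero]
  omega

theorem det_dotProduct_ne_zero_iff_linearIndependent {ι : Type*} [Fintype ι] [DecidableEq ι]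
    {m : ℕ} (w : ι → Fin m → ℝ) :
    (Matrix.of fun i j ↦ w i ⬝ᵥ w j).det ≠ 0 ↔ LinearIndependent ℝ w := by
  -- `Fin m → ℝ` carries the sup norm, so the Gram matrix is taken in `EuclideanSpace ℝ (Fin m)`.
  have hgram : (Matrix.of fun i j ↦ w i ⬝ᵥ w j) =
      Matrix.gram ℝ fun i ↦ WithLp.toLp 2 (w i) := by
    ext i j
    simp [Matrix.gram, EuclideanSpace.inner_eq_star_dotProduct, dotProduct_comm]
  rw [hgram, Matrix.det_gram_ne_zero_iff_linearIndependent]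
  exact LinearMap.linearIndependent_iff (WithLp.linearEquiv 2 ℝ (Fin m → ℝ)).symm.toLinearMap
    (LinearEquiv.ker _)

end LinearAlgebra

section Analytic

variable {𝕜 E F : Type*} [NontriviallyNormedField 𝕜] [CharZero 𝕜] [NormedAddCommGroup E]
  [NormedSpace 𝕜 E] [NormedAddCommGroup F] [NormedSpace 𝕜 F] [CompleteSpace F]

theorem AnalyticAt.eventuallyEq_zero_of_iteratedFDeriv_eq_zero {f : E → F} {x : E}
    (hf : AnalyticAt 𝕜 f x) (h : ∀ n, iteratedFDeriv 𝕜 n f x = 0) : f =ᶠ[𝓝 x] 0 := by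
  obtain ⟨p, r, hp⟩ := hf
  have hdiag : ∀ n y, p n (fun _ ↦ y) = 0 := fun n y ↦ by
    have := hp.factorial_smul y n
    rw [h n, zero_apply, ← Nat.cast_smul_eq_nsmul 𝕜] at this
    exact (smul_eq_zero.1 this).resolve_left (Nat.cast_ne_zero.2 n.factorial_ne_zero)
  filter_upwards [hp.eventually_hasSum_sub] with y hy
  have : (fun n ↦ p n fun _ ↦ y - x) = 0 := funext fun n ↦ hdiag n _
  rw [this] at hy
  exact hy.unique hasSum_zero

end Analytic

theorem analyticOnNhd_det {𝕜 E ι : Type*} [NontriviallyNormedField 𝕜] [NormedAddCommGroup E]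
    [NormedSpace 𝕜 E] [Fintype ι] [DecidableEq ι] {f : E → Matrix ι ι 𝕜} {s : Set E}
    (hf : ∀ i j, AnalyticOnNhd 𝕜 (fun x ↦ f x i j) s) :
    AnalyticOnNhd 𝕜 (fun x ↦ (f x).det) s := by
  simp_rw [Matrix.det_apply']
  exact Finset.analyticOnNhd_fun_sum _ fun σ _ ↦
    analyticOnNhd_const.mul (Finset.analyticOnNhd_fun_prod _ fun i _ ↦ hf (σ i) i)

section Calculus

variable {E F : Type*} [NormedAddCommGroup E] [NormedSpace ℝ E] [NormedAddCommGroup F]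
  [NormedSpace ℝ F]

theorem tangentConeAt_eq_univ_of_eventually_nonempty_inter_closedBall {s : Set E} {x : E}
    (h : ∀ v : E, ∀ ε > 0, ∀ᶠ r in 𝓝[>] (0 : ℝ), (s ∩ closedBall (x + r • v) (ε * r)).Nonempty) :
    tangentConeAt ℝ s x = univ := by
  refine eq_univ_of_forall fun v ↦ ?_
  rw [tangentConeAt_eq_biInter_closure, mem_iInter₂]
  intro U hU
  obtain ⟨η, hη, hηU⟩ := Metric.mem_nhds_iff.1 hU
  rw [Metric.mem_closure_iff]
  intro ε hε
  have hsmall : ∀ᶠ r in 𝓝[>] (0 : ℝ), r * (‖v‖ + ε / 2) < η :=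
    (((continuous_mul_const _).tendsto' 0 0 (zero_mul _)).mono_left nhdsWithin_le_nhds).eventually
      (gt_mem_nhds hη)
  obtain ⟨r, ⟨y, hys, hy⟩, hr, hrpos⟩ :=
    ((h v (ε / 2) (half_pos hε)).and (hsmall.and self_mem_nhdsWithin)).exists
  rw [mem_closedBall, dist_comm] at hy
  replace hrpos : (0 : ℝ) < r := hrpos
  have hyx : ‖y - x‖ < η := by
    calc ‖y - x‖ = ‖r • v + (y - (x + r • v))‖ := by congr 1; abel
      _ ≤ r * ‖v‖ + ε / 2 * r := by
        grw [norm_add_le, norm_smul, Real.norm_of_nonneg hrpos.le, ← dist_eq_norm, dist_comm,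
          hy]
      _ < η := by linarith
  -- `r⁻¹ • (y - x)`, with `y ∈ s` close to `x + r • v`, approximates `v`.
  refine ⟨r⁻¹ • (y - x), smul_mem_smul (mem_univ _) ⟨hηU (mem_ball_zero_iff.2 hyx), ?_⟩, ?_⟩
  · simpa using hys
  · calc dist v (r⁻¹ • (y - x)) = dist (r⁻¹ • (x + r • v)) (r⁻¹ • y) := by
          rw [dist_eq_norm, dist_eq_norm, smul_add, smul_smul, inv_mul_cancel₀ hrpos.ne',
            one_smul, smul_sub]
          abel_nf
      _ = r⁻¹ * dist (x + r • v) y := by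
          rw [dist_smul₀, Real.norm_of_nonneg (inv_nonneg.2 hrpos.le)]
      _ ≤ r⁻¹ * (ε / 2 * r) := by gcongr
      _ < ε := by field_simp; linarith

theorem range_fderiv_le_ker_fderiv_of_comp_eventuallyEq {G : Type*} [NormedAddCommGroup G]
    [NormedSpace ℝ G] {g : E → F} {φ : F → G} {x : E} {c : G}
    (hφ : DifferentiableAt ℝ φ (g x)) (hg : DifferentiableAt ℝ g x)
    (h : φ ∘ g =ᶠ[𝓝 x] fun _ ↦ c) :
    LinearMap.range (fderiv ℝ g x).toLinearMap ≤
      LinearMap.ker (fderiv ℝ φ (g x)).toLinearMap := by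
  rintro _ ⟨a, rfl⟩
  change fderiv ℝ φ (g x) (fderiv ℝ g x a) = 0
  rw [← ContinuousLinearMap.comp_apply, ← fderiv_comp x hφ hg, h.fderiv_eq, fderiv_const_apply,
    zero_apply]

theorem eventually_ker_inf_eq_bot {X : Type*} [TopologicalSpace X] {T : X → E →L[ℝ] F} {y₀ : X}
    (hT : ContinuousAt T y₀) (L : Submodule ℝ E) [FiniteDimensional ℝ L]
    (h : LinearMap.ker (T y₀).toLinearMap ⊓ L = ⊥) :
    ∀ᶠ y in 𝓝 y₀, LinearMap.ker (T y).toLinearMap ⊓ L = ⊥ := by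
  have hiff : ∀ S : E →L[ℝ] F,
      LinearMap.ker S.toLinearMap ⊓ L = ⊥ ↔ Function.Injective (S.comp L.subtypeL) := by
    intro S
    rw [← ContinuousLinearMap.coe_coe, ← LinearMap.ker_eq_bot,
      ContinuousLinearMap.toLinearMap_comp, LinearMap.ker_comp, Submodule.toLinearMap_subtypeL,
      ← Submodule.disjoint_iff_comap_eq_bot, disjoint_iff, inf_comm]
  simp only [hiff] at h ⊢
  exact (hT.clm_comp continuousAt_const).eventually_mem
    (ContinuousLinearMap.isOpen_injective.mem_nhds h)

theorem hasFDerivAt_comp_fst_add_clm_comp_snd {V : Type*} [NormedAddCommGroup V]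
    [NormedSpace ℝ V] {g : E → F} {ξ : E} (hg : DifferentiableAt ℝ g ξ) (C : V →L[ℝ] F)
    (ζ : V) : HasFDerivAt (fun p : E × V ↦ g p.1 + C p.2) ((fderiv ℝ g ξ).coprod C) (ξ, ζ) := by
  have hfst : HasFDerivAt (fun p : E × V ↦ g p.1)
      ((fderiv ℝ g ξ).comp (ContinuousLinearMap.fst ℝ E V)) (ξ, ζ) :=
    hg.hasFDerivAt.comp (ξ, ζ) hasFDerivAt_fst
  exact hfst.fun_add (C.hasFDerivAt.comp (ξ, ζ) hasFDerivAt_snd)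

theorem jRank_comp_fst_add_clm_comp_snd {V : Type*} [NormedAddCommGroup V] [NormedSpace ℝ V]
    {g : E → F} {ξ : E} (hg : DifferentiableAt ℝ g ξ) (C : V →L[ℝ] F) (ζ : V) :
    jRank (fun p : E × V ↦ g p.1 + C p.2) (ξ, ζ) = finrank ℝ
      ↥(LinearMap.range (fderiv ℝ g ξ).toLinearMap ⊔ LinearMap.range C.toLinearMap) := by
  rw [jRank, (hasFDerivAt_comp_fst_add_clm_comp_snd hg C ζ).fderiv,
    ContinuousLinearMap.range_coprod]

end Calculus

section NullSets

variable {E : Type*} [NormedAddCommGroup E] [NormedSpace ℝ E] [FiniteDimensional ℝ E]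
  [MeasurableSpace E] [BorelSpace E] (μ : Measure E) [μ.IsAddHaarMeasure]

theorem ae_eventually_nonempty_inter_closedBall (s : Set E) :
    ∀ᵐ x ∂μ.restrict s, ∀ v : E, ∀ ε > 0,
      ∀ᶠ r in 𝓝[>] (0 : ℝ), (s ∩ closedBall (x + r • v) (ε * r)).Nonempty := by
  have hdens := ae_all_iff.2 fun K : ℕ ↦
    IsUnifLocDoublingMeasure.ae_tendsto_measure_inter_div μ s K
  filter_upwards [hdens] with x hx v ε hε
  -- Density along the balls `closedBall (x + r • v) (ε * r)`, which stay within `K` radii of `x`.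
  obtain ⟨K, hK⟩ := exists_nat_ge (‖v‖ / ε)
  have hδ : Tendsto (fun r : ℝ ↦ ε * r) (𝓝[>] 0) (𝓝[>] 0) :=
    tendsto_nhdsWithin_iff.2
      ⟨((continuous_const_mul ε).tendsto' 0 0 (mul_zero ε)).mono_left nhdsWithin_le_nhds,
        eventually_mem_nhdsWithin.mono fun _ hr ↦ mul_pos hε hr⟩
  have hcenter : ∀ᶠ r in 𝓝[>] (0 : ℝ), x ∈ closedBall (x + r • v) (K * (ε * r)) := by
    filter_upwards [self_mem_nhdsWithin] with r (hr : 0 < r)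
    rw [mem_closedBall, dist_self_add_right, norm_smul, Real.norm_of_nonneg hr.le]
    calc r * ‖v‖ = ‖v‖ / ε * (ε * r) := by field_simp
      _ ≤ K * (ε * r) := by gcongr
  filter_upwards [(hx K _ _ hδ hcenter).eventually (lt_mem_nhds zero_lt_one)] with r hr
  exact nonempty_of_measure_ne_zero (ENNReal.div_pos_iff.1 hr).1

theorem ae_uniqueDiffWithinAt (s : Set E) : ∀ᵐ x ∂μ, x ∈ s → UniqueDiffWithinAt ℝ s x := by
  refine ae_imp_of_ae_restrict ?_
  filter_upwards [ae_eventually_nonempty_inter_closedBall μ s] with x hx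
  have hcone := tangentConeAt_eq_univ_of_eventually_nonempty_inter_closedBall hx
  rw [uniqueDiffWithinAt_iff, hcone, Submodule.span_univ, Submodule.top_coe]
  exact ⟨dense_univ, mem_closure_of_nonempty_tangentConeAt (hcone ▸ univ_nonempty)⟩

theorem AnalyticOnNhd.measure_zeros_eq_zero {F : Type*} [NormedAddCommGroup F]
    [NormedSpace ℝ F] [CompleteSpace F] {Ω : Set E} {f : E → F} (hf : AnalyticOnNhd ℝ f Ω)
    (hΩ : IsPreconnected Ω) {x₀ : E} (hx₀ : x₀ ∈ Ω) (hfx₀ : f x₀ ≠ 0) :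
    μ {x ∈ Ω | f x = 0} = 0 := by
  set W : ℕ → Set E := fun n ↦ {x ∈ Ω | iteratedFDeriv ℝ n f x = 0}
  -- At almost every point of `W n`, the derivative of `iteratedFDeriv ℝ n f` can be computed
  -- within `W n`, where that function vanishes.
  have hstep : ∀ n, μ (W n \ W (n + 1)) = 0 := by
    intro n
    have hae := ae_iff.1 (ae_uniqueDiffWithinAt μ (W n))
    refine measure_mono_null ?_ hae
    intro x hx hdiff
    refine hx.2 ⟨hx.1.1, ?_⟩
    have hzero : fderiv ℝ (iteratedFDeriv ℝ n f) x = 0 := by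
      rw [← ((hf.iteratedFDeriv n) x hx.1.1).differentiableAt.fderivWithin (hdiff hx.1),
        fderivWithin_congr (fun y hy ↦ hy.2) hx.1.2, fderivWithin_const_apply]
    rw [iteratedFDeriv_succ_eq_comp_left, Function.comp_apply, hzero,
      LinearIsometryEquiv.map_zero]
  have hW : ∀ n, μ (W 0 \ W n) = 0 := by
    intro n
    induction n with
    | zero => simp
    | succ n ih =>
      refine measure_mono_null (fun x hx ↦ ?_) (measure_union_null ih (hstep n))
      by_cases hxn : x ∈ W n
      exacts [Or.inr ⟨hxn, hx.2⟩, Or.inl ⟨hx.1, hxn⟩]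
  have hnot_flat : ∀ x ∈ Ω, ∃ n, iteratedFDeriv ℝ n f x ≠ 0 := by
    intro x hx
    by_contra! hflat
    exact hfx₀ (hf.eqOn_zero_of_preconnected_of_eventuallyEq_zero hΩ hx
      ((hf x hx).eventuallyEq_zero_of_iteratedFDeriv_eq_zero hflat) hx₀)
  refine measure_mono_null (fun x ⟨hxΩ, hfx⟩ ↦ ?_) (measure_iUnion_null hW)
  obtain ⟨n, hn⟩ := hnot_flat x hxΩ
  refine mem_iUnion.2 ⟨n, ⟨hxΩ, ?_⟩, fun hxn ↦ hn hxn.2⟩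
  rw [← norm_eq_zero, norm_iteratedFDeriv_zero, hfx, norm_zero]

theorem AnalyticOnNhd.measure_setOf_finrank_range_lt {V : Type*} [NormedAddCommGroup V]
    [NormedSpace ℝ V] {m : ℕ} {Ω : Set E} {T : E → V →L[ℝ] Fin m → ℝ}
    (hT : AnalyticOnNhd ℝ T Ω) (hΩ : IsPreconnected Ω) {x₀ : E} (hx₀ : x₀ ∈ Ω) :
    μ {x ∈ Ω | finrank ℝ (LinearMap.range (T x).toLinearMap) <
      finrank ℝ (LinearMap.range (T x₀).toLinearMap)} = 0 := by
  obtain ⟨v, hv⟩ := (le_finrank_range_iff_exists_linearIndependent (T x₀).toLinearMap).1 le_rfl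
  have hcoord : ∀ w l, AnalyticOnNhd ℝ (fun x ↦ T x w l) Ω := fun w l ↦
    ((ContinuousLinearMap.proj (R := ℝ) (φ := fun _ : Fin m ↦ ℝ) l).comp
      (ContinuousLinearMap.apply ℝ (Fin m → ℝ) w)).comp_analyticOnNhd hT
  have hgram : AnalyticOnNhd ℝ (fun x ↦ (Matrix.of fun i j ↦ T x (v i) ⬝ᵥ T x (v j)).det) Ω :=
    analyticOnNhd_det fun i j ↦
      Finset.analyticOnNhd_fun_sum Finset.univ fun l _ ↦ (hcoord (v i) l).mul (hcoord (v j) l)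
  refine measure_mono_null ?_ (hgram.measure_zeros_eq_zero μ hΩ hx₀
    ((det_dotProduct_ne_zero_iff_linearIndependent _).2 hv))
  rintro x ⟨hx, hlt⟩
  refine ⟨hx, not_not.1 fun hne ↦ ?_⟩
  exact hlt.not_ge ((le_finrank_range_iff_exists_linearIndependent _).2
    ⟨v, (det_dotProduct_ne_zero_iff_linearIndependent _).1 hne⟩)

theorem AnalyticOnNhd.measure_setOf_finrank_range_sup_lt {D V : Type*} [NormedAddCommGroup D]
    [NormedSpace ℝ D] [NormedAddCommGroup V] [NormedSpace ℝ V] {m : ℕ} {Ω : Set E}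
    {S : E → D →L[ℝ] Fin m → ℝ} (hS : AnalyticOnNhd ℝ S Ω) (hΩ : IsPreconnected Ω)
    (C : V →L[ℝ] Fin m → ℝ) {x₀ : E} (hx₀ : x₀ ∈ Ω) :
    μ {x ∈ Ω | finrank ℝ ↥(LinearMap.range (S x).toLinearMap ⊔ LinearMap.range C.toLinearMap)
      < finrank ℝ ↥(LinearMap.range (S x₀).toLinearMap ⊔ LinearMap.range C.toLinearMap)} = 0 := by
  have hT : AnalyticOnNhd ℝ (fun x ↦ (S x).coprod C) Ω :=
    (ContinuousLinearMap.coprodEquivL (𝕜 := ℝ) (E := D) (F := V) (G := Fin m → ℝ)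
      ℝ).toContinuousLinearMap.comp_analyticOnNhd (hS.prod (analyticOnNhd_const (v := C)))
  have hrank : ∀ x, finrank ℝ (LinearMap.range ((S x).coprod C).toLinearMap) =
      finrank ℝ ↥(LinearMap.range (S x).toLinearMap ⊔ LinearMap.range C.toLinearMap) :=
    fun x ↦ by rw [ContinuousLinearMap.range_coprod]
  simpa only [hrank] using hT.measure_setOf_finrank_range_lt μ hΩ hx₀

end NullSets

section Submanifold

variable {E : Type*} [NormedAddCommGroup E] [NormedSpace ℝ E] {m ρ : ℕ}

theorem SubmanifoldDataAt.range_fderiv_le_ker {Ω : Set E} {g : E → Fin m → ℝ}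
    {x : Fin m → ℝ} {U : Set (Fin m → ℝ)} {φ : (Fin m → ℝ) → Fin (m - ρ) → ℝ}
    (h : SubmanifoldDataAt (g '' Ω) ρ x U φ) {ξ : E} (hΩ : Ω ∈ 𝓝 ξ)
    (hg : DifferentiableAt ℝ g ξ) (hgξ : g ξ ∈ U) :
    LinearMap.range (fderiv ℝ g ξ).toLinearMap ≤
      LinearMap.ker (fderiv ℝ φ (g ξ)).toLinearMap := by
  obtain ⟨hU, -, hφ, -, hMU⟩ := h
  refine range_fderiv_le_ker_fderiv_of_comp_eventuallyEq
    ((hφ.contDiffAt (hU.mem_nhds hgξ)).differentiableAt two_ne_zero) hg (c := 0) ?_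
  filter_upwards [hΩ, hg.continuousAt.preimage_mem_nhds (hU.mem_nhds hgξ)] with ξ' hξ' hU'
  have hmem : g ξ' ∈ g '' Ω ∩ U := ⟨mem_image_of_mem g hξ', hU'⟩
  rw [hMU] at hmem
  exact hmem.2

theorem SubmanifoldDataAt.finrank_ker_fderiv {M : Set (Fin m → ℝ)} {x : Fin m → ℝ}
    {U : Set (Fin m → ℝ)} {φ : (Fin m → ℝ) → Fin (m - ρ) → ℝ}
    (h : SubmanifoldDataAt M ρ x U φ) {y : Fin m → ℝ} (hy : y ∈ U) :
    finrank ℝ (LinearMap.ker (fderiv ℝ φ y).toLinearMap) = m - (m - ρ) := by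
  have := LinearMap.finrank_range_add_finrank_ker (fderiv ℝ φ y).toLinearMap
  rw [LinearMap.range_eq_top.2 (h.2.2.2.1 y hy), finrank_top, finrank_fin_fun,
    finrank_fin_fun] at this
  omega

theorem SubmanifoldDataAt.wellPosedAt {Ω : Set E} {g : E → Fin m → ℝ}
    {L : Submodule ℝ (Fin m → ℝ)} {U : Set (Fin m → ℝ)} {φ : (Fin m → ℝ) → Fin (m - ρ) → ℝ}
    {ξ : E} (h : SubmanifoldDataAt (g '' Ω) ρ (g ξ) U φ) (hΩ : Ω ∈ 𝓝 ξ)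
    (hg : DifferentiableAt ℝ g ξ) (hrank : jRank g ξ = ρ)
    (hL : LinearMap.range (fderiv ℝ g ξ).toLinearMap ⊓ L = ⊥) :
    WellPosedAt (g '' Ω) L ρ (g ξ) := by
  have hle := h.range_fderiv_le_ker hΩ hg h.2.1
  have hker := h.finrank_ker_fderiv h.2.1
  have hρm : ρ ≤ m := hrank ▸ (Submodule.finrank_le _).trans_eq (finrank_fin_fun ℝ)
  have hrange := Submodule.eq_of_le_of_finrank_le hle (by unfold jRank at hrank; omega)
  exact ⟨U, φ, h, hrange ▸ hL⟩

end Submanifold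

theorem WellPosedAt.exists_jRank_eq_and_inf_eq_bot {d m ρ : ℕ} {Ξ : Set (Fin d → ℝ)}
    (hopen : IsOpen Ξ) (hconn : IsPreconnected Ξ) {𝒢 : (Fin d → ℝ) → Fin m → ℝ}
    (h𝒢 : AnalyticOnNhd ℝ 𝒢 Ξ) (hρ : IsGreatest (jRank 𝒢 '' Ξ) ρ)
    {L : Submodule ℝ (Fin m → ℝ)} {ξ₀ : Fin d → ℝ} (hξ₀ : ξ₀ ∈ Ξ)
    (hwp : WellPosedAt (𝒢 '' Ξ) L ρ (𝒢 ξ₀)) :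
    ∃ ξ ∈ Ξ, jRank 𝒢 ξ = ρ ∧ LinearMap.range (fderiv ℝ 𝒢 ξ).toLinearMap ⊓ L = ⊥ := by
  obtain ⟨U, φ, hdata, hker⟩ := hwp
  obtain ⟨hU, hx₀U, hφ, -, -⟩ := id hdata
  obtain ⟨ξρ, hξρ, hrankρ⟩ := hρ.1
  have hφ' : ContinuousAt (fderiv ℝ φ) (𝒢 ξ₀) :=
    (hφ.continuousOn_fderiv_of_isOpen hU one_le_two).continuousAt (hU.mem_nhds hx₀U)
  have htrans := (hU.eventually_mem hx₀U).and (eventually_ker_inf_eq_bot hφ' L hker)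
  obtain ⟨O, hOsub, hOopen, hξ₀O⟩ := _root_.eventually_nhds_iff.1
    (((h𝒢 ξ₀ hξ₀).continuousAt.eventually htrans).and (hopen.eventually_mem hξ₀))
  -- `O` has positive volume, while the points of deficient rank form a null set.
  set N := {ξ ∈ Ξ | jRank 𝒢 ξ < jRank 𝒢 ξρ}
  have hN : volume N = 0 := h𝒢.fderiv.measure_setOf_finrank_range_lt volume hconn hξρ
  obtain ⟨ξ, hξO, hξN⟩ : (O \ N).Nonempty := nonempty_of_measure_ne_zero <| by
    rw [measure_sdiff_null hN]
    exact (hOopen.measure_pos volume ⟨ξ₀, hξ₀O⟩).ne'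
  obtain ⟨⟨hξU, hξker⟩, hξ⟩ := hOsub ξ hξO
  have hrank : jRank 𝒢 ξ = ρ :=
    (hρ.2 ⟨ξ, hξ, rfl⟩).antisymm (hrankρ ▸ not_lt.1 fun hlt ↦ hξN ⟨hξ, hlt⟩)
  refine ⟨ξ, hξ, hrank, le_bot_iff.1 ?_⟩
  exact hξker ▸ inf_le_inf_right L
    (hdata.range_fderiv_le_ker (hopen.mem_nhds hξ) (h𝒢 ξ hξ).differentiableAt hξU)

theorem wellPosed_iff_characteristicRank_add_general
    {d m k : ℕ} {Ξ : Set (Fin d → ℝ)}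
    (hopen : IsOpen Ξ) (hconn : IsConnected Ξ)
    {𝒢 : (Fin d → ℝ) → (Fin m → ℝ)} (h𝒢 : AnalyticOnNhd ℝ 𝒢 Ξ)
    (ρ : ℕ) (hρ : IsGreatest (jRank 𝒢 '' Ξ) ρ)
    (A : Matrix (Fin m) (Fin k) ℝ) (hA : A.rank = k)
    (L : Submodule ℝ (Fin m → ℝ)) (hL : L = LinearMap.range A.mulVecLin)
    (G : ((Fin d → ℝ) × (Fin k → ℝ)) → (Fin m → ℝ))
    (hG : ∀ ξ ζ, G (ξ, ζ) = 𝒢 ξ + A.mulVec ζ)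
    (𝔯 : ℕ) (h𝔯 : IsGreatest (jRank G '' (Ξ ×ˢ (Set.univ : Set (Fin k → ℝ)))) 𝔯) :
    ((∃ x ∈ 𝒢 '' Ξ, WellPosedAt (𝒢 '' Ξ) L ρ x) → 𝔯 = ρ + k) ∧
    ((∀ x ∈ 𝒢 '' Ξ, IsManifoldAt (𝒢 '' Ξ) ρ x) → 𝔯 = ρ + k →
      ∃ Υ : Set (Fin d → ℝ), Υ ⊆ Ξ ∧ volume Υ = 0 ∧
        ∀ ξ ∈ Ξ \ Υ, WellPosedAt (𝒢 '' Ξ) L ρ (𝒢 ξ)) := by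
  set C := LinearMap.toContinuousLinearMap A.mulVecLin
  set J := fun ξ ↦ LinearMap.range (fderiv ℝ 𝒢 ξ).toLinearMap
  have hLC : LinearMap.range C.toLinearMap = L := by
    rw [hL, LinearMap.coe_toContinuousLinearMap]
  have hLk : finrank ℝ L = k := hL ▸ hA
  obtain rfl : G = fun p ↦ 𝒢 p.1 + C p.2 := funext fun p ↦ hG p.1 p.2
  have hrankG : ∀ ξ ∈ Ξ, ∀ ζ, jRank (fun p ↦ 𝒢 p.1 + C p.2) (ξ, ζ) = finrank ℝ ↥(J ξ ⊔ L) :=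
    fun ξ hξ ζ ↦ hLC ▸ jRank_comp_fst_add_clm_comp_snd (h𝒢 ξ hξ).differentiableAt C ζ
  have hbound : ∀ ξ ∈ Ξ, finrank ℝ ↥(J ξ ⊔ L) ≤ ρ + k := fun ξ hξ ↦
    hLk ▸ (Submodule.finrank_add_le_finrank_add_finrank _ _).trans
      (Nat.add_le_add_right (hρ.2 ⟨ξ, hξ, rfl⟩) _)
  have hkey : ∀ ξ ∈ Ξ, finrank ℝ ↥(J ξ ⊔ L) = ρ + k ↔ jRank 𝒢 ξ = ρ ∧ J ξ ⊓ L = ⊥ :=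
    fun ξ hξ ↦ hLk ▸ finrank_sup_eq_add_iff (hρ.2 ⟨ξ, hξ, rfl⟩)
  have hle𝔯 : ∀ ξ ∈ Ξ, finrank ℝ ↥(J ξ ⊔ L) ≤ 𝔯 := fun ξ hξ ↦
    hrankG ξ hξ 0 ▸ h𝔯.2 ⟨(ξ, 0), ⟨hξ, mem_univ _⟩, rfl⟩
  obtain ⟨⟨ξs, ζs⟩, ⟨hξs, -⟩, hξs𝔯⟩ := h𝔯.1
  rw [hrankG ξs hξs ζs] at hξs𝔯
  constructor
  · rintro ⟨_, ⟨ξ₀, hξ₀, rfl⟩, hwp⟩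
    obtain ⟨ξ, hξ, hgood⟩ :=
      hwp.exists_jRank_eq_and_inf_eq_bot hopen hconn.isPreconnected h𝒢 hρ hξ₀
    exact (hξs𝔯 ▸ hbound ξs hξs).antisymm ((hkey ξ hξ).2 hgood ▸ hle𝔯 ξ hξ)
  · intro hman h𝔯eq
    refine ⟨_, sep_subset Ξ _,
      hLC ▸ h𝒢.fderiv.measure_setOf_finrank_range_sup_lt volume hconn.isPreconnected C hξs, ?_⟩
    rintro ξ ⟨hξ, hξgood⟩
    obtain ⟨hrank, hinf⟩ := (hkey ξ hξ).1 <| (hbound ξ hξ).antisymm <|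
      h𝔯eq ▸ hξs𝔯 ▸ not_lt.1 fun hlt ↦ hξgood ⟨hξ, hlt⟩
    obtain ⟨U, φ, hdata⟩ := hman (𝒢 ξ) (mem_image_of_mem 𝒢 hξ)
    exact hdata.wellPosedAt (hopen.mem_nhds hξ) (h𝒢 ξ hξ).differentiableAt hrank hinf

/-- Decomposable model `G(ξ, ζ) = 𝒢(ξ) + Aζ` with `𝒢` analytic of
characteristic rank `ρ`, `A` an `m×k` matrix of rank `k`, `ℒ` the column space of `A`,
`ℳ = 𝒢(Ξ)` and `𝔯` the characteristic rank of `G`.  (i) If some `x ∈ ℳ` is well-posed,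
then `𝔯 = ρ + k`.  (ii) Conversely, if `ℳ` is a `C²` submanifold of dimension `ρ` near
each of its points and `𝔯 = ρ + k`, then for a.e. `ξ ∈ Ξ` the point `𝒢(ξ)` is
well-posed. -/
theorem wellPosed_iff_characteristicRank_add
    {d m k : ℕ} {Ξ : Set (Fin d → ℝ)}
    (hne : Ξ.Nonempty) (hopen : IsOpen Ξ) (hconn : IsConnected Ξ)
    {𝒢 : (Fin d → ℝ) → (Fin m → ℝ)} (h𝒢 : AnalyticOnNhd ℝ 𝒢 Ξ)
    (ρ : ℕ) (hρ : IsGreatest (jRank 𝒢 '' Ξ) ρ)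
    (A : Matrix (Fin m) (Fin k) ℝ) (hA : A.rank = k)
    (L : Submodule ℝ (Fin m → ℝ)) (hL : L = LinearMap.range A.mulVecLin)
    (G : ((Fin d → ℝ) × (Fin k → ℝ)) → (Fin m → ℝ))
    (hG : ∀ ξ ζ, G (ξ, ζ) = 𝒢 ξ + A.mulVec ζ)
    (𝔯 : ℕ) (h𝔯 : IsGreatest (jRank G '' (Ξ ×ˢ (Set.univ : Set (Fin k → ℝ)))) 𝔯) :
    ((∃ x ∈ 𝒢 '' Ξ, WellPosedAt (𝒢 '' Ξ) L ρ x) → 𝔯 = ρ + k) ∧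
    ((∀ x ∈ 𝒢 '' Ξ, IsManifoldAt (𝒢 '' Ξ) ρ x) → 𝔯 = ρ + k →
      ∃ Υ : Set (Fin d → ℝ), Υ ⊆ Ξ ∧ volume Υ = 0 ∧
        ∀ ξ ∈ Ξ \ Υ, WellPosedAt (𝒢 '' Ξ) L ρ (𝒢 ξ)) :=
  wellPosed_iff_characteristicRank_add_general hopen hconn h𝒢 ρ hρ A hA L hL G hG 𝔯 h𝔯
end

section
/- Let ℳ ⊆ ℝ^m, let ℒ ⊆ ℝ^m be a linear subspace, and let x* ∈ ℳ be a well-posed point, i.e., ℳ is a C² submanifold of dimension ρ in a neighborhood of x* and T_ℳ(x*) ∩ ℒ = {0}. Then the model is locally identifiable at x*: there exists an open neighborhood W of x* such that whenever x' ∈ ℳ ∩ W and v', v ∈ ℒ satisfy x* + v = x' + v', it follows that x' = x*. -/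
/-!
Along the affine slice `x* + ℒ` the defining map `φ` has the injective differential
`Dφ(x*)|_ℒ`, because `ker Dφ(x*) ∩ ℒ = {0}`. An injective linear map on a
finite-dimensional space is antilipschitz, so `φ(x* + w) - φ(x*)`, which is
`Dφ(x*) w + o(‖w‖)`, is nonzero for small nonzero `w ∈ ℒ`. A point `x'` of `ℳ` near `x*`
with `x' - x* = v - v' ∈ ℒ` has `φ x' = 0 = φ x*`, hence `x' = x*`.
-/

open Filter Topology

theorem HasFDerivAt.eventually_eq_of_sub_mem_of_ker_inf_eq_bot
    {𝕜 E F : Type*} [NontriviallyNormedField 𝕜] [CompleteSpace 𝕜]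
    [NormedAddCommGroup E] [NormedSpace 𝕜 E] [NormedAddCommGroup F] [NormedSpace 𝕜 F]
    {φ : E → F} {D : E →L[𝕜] F} {a : E} {L : Submodule 𝕜 E} [FiniteDimensional 𝕜 L]
    (hφ : HasFDerivAt φ D a) (hker : LinearMap.ker D.toLinearMap ⊓ L = ⊥) :
    ∀ᶠ x in 𝓝 a, x - a ∈ L → φ x = φ a → x = a := by
  have hslice : HasFDerivAt (fun w : L => φ (a + w)) (D.comp L.subtypeL) 0 := by
    have hshift : HasFDerivAt (fun w : L => a + (w : E)) L.subtypeL 0 :=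
      L.subtypeL.hasFDerivAt.const_add a
    have hφ' : HasFDerivAt φ D (a + ((0 : L) : E)) := by simpa using hφ
    exact hφ'.comp (f := fun w : L => a + (w : E)) 0 hshift
  have hinj : LinearMap.ker (D.comp L.subtypeL).toLinearMap = ⊥ := by
    rw [ContinuousLinearMap.toLinearMap_comp, LinearMap.ker_comp, Submodule.toLinearMap_subtypeL,
      ← Submodule.disjoint_iff_comap_eq_bot, disjoint_iff, inf_comm, hker]
  obtain ⟨K, -, hK⟩ := (D.comp L.subtypeL).toLinearMap.exists_antilipschitzWith hinj
  have hne : ∀ᶠ w : L in 𝓝 0, w ≠ 0 → φ (a + w) ≠ φ a :=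
    (eventually_nhdsWithin_iff.1 (hslice.eventually_ne ⟨K, hK⟩)).mono fun w hw hw0 => by
      simpa using hw hw0
  rw [nhds_subtype, Submodule.coe_zero, eventually_comap] at hne
  have hsub : Tendsto (fun x => x - a) (𝓝 a) (𝓝 0) :=
    (continuous_sub_right a).tendsto' a 0 (sub_self a)
  filter_upwards [hsub.eventually hne] with x hx hxL hφx
  by_contra hxa
  exact hx ⟨x - a, hxL⟩ rfl (by simpa [sub_eq_zero] using hxa) (by simpa using hφx)

theorem locally_identifiable_of_wellPosed_general
    {m ρ : ℕ} {M : Set (Fin m → ℝ)} {L : Submodule ℝ (Fin m → ℝ)}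
    {xstar : Fin m → ℝ} (hxstar : xstar ∈ M)
    {U : Set (Fin m → ℝ)} {φ : (Fin m → ℝ) → (Fin (m - ρ) → ℝ)}
    (hU : IsOpen U) (hxU : xstar ∈ U)
    (hφ : ContDiffOn ℝ 2 φ U)
    (hMU : M ∩ U = {y ∈ U | φ y = 0})
    (htan : LinearMap.ker (fderiv ℝ φ xstar).toLinearMap ⊓ L = ⊥) :
    ∃ W : Set (Fin m → ℝ), IsOpen W ∧ xstar ∈ W ∧
      ∀ x' ∈ M ∩ W, ∀ v ∈ L, ∀ v' ∈ L, xstar + v = x' + v' → x' = xstar := by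
  have hφ_zero : ∀ y ∈ M ∩ U, φ y = 0 := fun y hy => (hMU ▸ hy).2
  have hderiv : HasFDerivAt φ (fderiv ℝ φ xstar) xstar :=
    ((hφ.contDiffAt (hU.mem_nhds hxU)).differentiableAt (by norm_num)).hasFDerivAt
  obtain ⟨W, hW, hW_open, hxW⟩ :=
    eventually_nhds_iff.1 (hderiv.eventually_eq_of_sub_mem_of_ker_inf_eq_bot htan)
  refine ⟨W ∩ U, hW_open.inter hU, ⟨hxW, hxU⟩, ?_⟩
  rintro x' ⟨hx'M, hx'W, hx'U⟩ v hv v' hv' hsum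
  have hdiff : x' - xstar = v - v' := by
    rw [sub_eq_sub_iff_add_eq_add, ← hsum, add_comm]
  exact hW x' hx'W (hdiff ▸ L.sub_mem hv hv')
    ((hφ_zero x' ⟨hx'M, hx'U⟩).trans (hφ_zero xstar ⟨hxstar, hxU⟩).symm)

/-- If `x* ∈ ℳ` is a well-posed point — `ℳ` is a `C²` submanifold of
dimension `ρ` near `x*` (cut out locally by the `C²` submersion `φ : U → ℝ^{m-ρ}`) and
the tangent space `T_ℳ(x*) = ker Dφ(x*)` meets the linear subspace `ℒ` only in `0` —
then the model is locally identifiable at `x*`: there is an open neighborhood `W` of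
`x*` such that `x' ∈ ℳ ∩ W`, `v, v' ∈ ℒ` and `x* + v = x' + v'` imply `x' = x*`. -/
theorem locally_identifiable_of_wellPosed
    {m ρ : ℕ} {M : Set (Fin m → ℝ)} {L : Submodule ℝ (Fin m → ℝ)}
    {xstar : Fin m → ℝ} (hxstar : xstar ∈ M)
    {U : Set (Fin m → ℝ)} {φ : (Fin m → ℝ) → (Fin (m - ρ) → ℝ)}
    (hU : IsOpen U) (hxU : xstar ∈ U)
    (hφ : ContDiffOn ℝ 2 φ U)
    (hsurj : ∀ y ∈ U, Function.Surjective (fderiv ℝ φ y))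
    (hMU : M ∩ U = {y ∈ U | φ y = 0})
    (htan : LinearMap.ker (fderiv ℝ φ xstar).toLinearMap ⊓ L = ⊥) :
    ∃ W : Set (Fin m → ℝ), IsOpen W ∧ xstar ∈ W ∧
      ∀ x' ∈ M ∩ W, ∀ v ∈ L, ∀ v' ∈ L, xstar + v = x' + v' → x' = xstar :=
  locally_identifiable_of_wellPosed_general hxstar hU hxU hφ hMU htan
end

section
/- Let r ≤ min{n₁, n₂}, let V be an n₁×r real matrix and W an n₂×r real matrix, both of full column rank r. Then the linear map (H, K) ↦ HWᵀ + VKᵀ, from ℝ^{n₁×r} × ℝ^{n₂×r} to ℝ^{n₁×n₂}, has rank r(n₁ + n₂ − r). Consequently, the characteristic rank of the map 𝒢(V, W) = VWᵀ on the set of pairs of full-column-rank matrices equals r(n₁ + n₂ − r). -/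
/-- The differential of the matrix factorization map `𝒢(V, W) = V Wᵀ` at `(V, W)`:
the linear map `(H, K) ↦ H Wᵀ + V Kᵀ`. -/
noncomputable def factorizationDiff {n₁ n₂ r : ℕ}
    (V : Matrix (Fin n₁) (Fin r) ℝ) (W : Matrix (Fin n₂) (Fin r) ℝ) :
    (Matrix (Fin n₁) (Fin r) ℝ × Matrix (Fin n₂) (Fin r) ℝ) →ₗ[ℝ]
      Matrix (Fin n₁) (Fin n₂) ℝ where
  toFun p := p.1 * W.transpose + V * p.2.transpose
  map_add' p q := by
    simp [Matrix.transpose_add, Matrix.add_mul, Matrix.mul_add]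
    abel
  map_smul' c p := by
    simp [Matrix.transpose_smul, Matrix.smul_mul, Matrix.mul_smul, smul_add]

/-- A real matrix of full column rank has a left inverse. -/
lemma exists_left_inverse_of_rank {n r : ℕ} (hr : r ≤ n)
    (M : Matrix (Fin n) (Fin r) ℝ) (hM : M.rank = r) :
    ∃ M' : Matrix (Fin r) (Fin n) ℝ, M' * M = 1 := by
  have hker : LinearMap.ker M.mulVecLin = ⊥ := by
    have h := LinearMap.finrank_range_add_finrank_ker M.mulVecLin
    rw [show Module.finrank ℝ (LinearMap.range M.mulVecLin) = r from hM] at h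
    simp only [Module.finrank_pi, Fintype.card_fin] at h
    have : Module.finrank ℝ (LinearMap.ker M.mulVecLin) = 0 := by omega
    exact Submodule.finrank_eq_zero.mp this
  have htl : Matrix.toLin' M = M.mulVecLin := by
    ext v i; simp [Matrix.toLin'_apply, Matrix.mulVecLin_apply]
  obtain ⟨g, hg⟩ := (Matrix.toLin' M).exists_leftInverse_of_injective (by rw [htl]; exact hker)
  refine ⟨LinearMap.toMatrix' g, ?_⟩
  have := LinearMap.toMatrix'_comp g (Matrix.toLin' M)
  rw [hg, LinearMap.toMatrix'_id, LinearMap.toMatrix'_toLin'] at this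
  exact this.symm

/-- For `V ∈ ℝ^{n₁×r}` and `W ∈ ℝ^{n₂×r}` of full column rank
`r ≤ min{n₁, n₂}`, the linear map `(H, K) ↦ H Wᵀ + V Kᵀ` has rank `r(n₁ + n₂ − r)`;
consequently the characteristic rank of `𝒢(V, W) = V Wᵀ` on full-column-rank pairs is
`r(n₁ + n₂ − r)`. -/
theorem rank_factorizationDiff {n₁ n₂ r : ℕ} (hr₁ : r ≤ n₁) (hr₂ : r ≤ n₂)
    (V : Matrix (Fin n₁) (Fin r) ℝ) (W : Matrix (Fin n₂) (Fin r) ℝ)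
    (hV : V.rank = r) (hW : W.rank = r) :
    Module.finrank ℝ (LinearMap.range (factorizationDiff V W)) = r * (n₁ + n₂ - r) := by
  obtain ⟨V', hV'⟩ := exists_left_inverse_of_rank hr₁ V hV
  obtain ⟨W', hW'⟩ := exists_left_inverse_of_rank hr₂ W hW
  -- the parametrization of the kernel
  set φ : Matrix (Fin r) (Fin r) ℝ →ₗ[ℝ]
      (Matrix (Fin n₁) (Fin r) ℝ × Matrix (Fin n₂) (Fin r) ℝ) :=
    { toFun := fun A => (V * A, -(W * A.transpose))
      map_add' := fun A B => by
        simp [Matrix.transpose_add, Matrix.mul_add]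
        abel
      map_smul' := fun c A => by
        simp [Matrix.transpose_smul, Matrix.mul_smul] } with hφ
  have hkerL : LinearMap.ker (factorizationDiff V W) = LinearMap.range φ := by
    apply le_antisymm
    · rintro ⟨H, K⟩ hHK
      have heq : H * W.transpose + V * K.transpose = 0 := hHK
      refine ⟨V' * H, ?_⟩
      have hK : K = -(W * (V' * H).transpose) := by
        have h1 : V * K.transpose = -(H * W.transpose) := by
          rw [eq_neg_iff_add_eq_zero, add_comm]; exact heq
        have h2 : K.transpose = -((V' * H) * W.transpose) := by
          calc K.transpose = (V' * V) * K.transpose := by rw [hV', Matrix.one_mul]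
            _ = V' * (V * K.transpose) := by rw [Matrix.mul_assoc]
            _ = -((V' * H) * W.transpose) := by
                rw [h1, Matrix.mul_neg, Matrix.mul_assoc]
        calc K = K.transpose.transpose := (Matrix.transpose_transpose K).symm
          _ = -(W * (V' * H).transpose) := by
              rw [h2, Matrix.transpose_neg, Matrix.transpose_mul,
                Matrix.transpose_transpose]
      have hH : H = V * (V' * H) := by
        have h1 : H * W.transpose = -(V * K.transpose) := by
          rw [eq_neg_iff_add_eq_zero]; exact heq
        have h3 : H = V * (-(K.transpose * W'.transpose)) := by
          calc H = H * (W' * W).transpose := by rw [hW']; simp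
            _ = H * W.transpose * W'.transpose := by
                rw [Matrix.transpose_mul, Matrix.mul_assoc]
            _ = -(V * K.transpose) * W'.transpose := by rw [h1]
            _ = V * (-(K.transpose * W'.transpose)) := by
                rw [Matrix.neg_mul, Matrix.mul_assoc, Matrix.mul_neg]
        calc H = V * (-(K.transpose * W'.transpose)) := h3
          _ = V * ((V' * V) * (-(K.transpose * W'.transpose))) := by
              rw [hV', Matrix.one_mul]
          _ = V * (V' * (V * (-(K.transpose * W'.transpose)))) := by
              rw [Matrix.mul_assoc]
          _ = V * (V' * H) := by rw [← h3]
      exact Prod.ext hH.symm hK.symm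
    · rintro ⟨H, K⟩ ⟨A, hA⟩
      have h1 : H = V * A := congrArg Prod.fst hA.symm
      have h2 : K = -(W * A.transpose) := congrArg Prod.snd hA.symm
      show H * W.transpose + V * K.transpose = 0
      rw [h1, h2]
      simp [Matrix.transpose_neg, Matrix.transpose_mul, Matrix.transpose_transpose,
        Matrix.mul_neg, Matrix.mul_assoc]
  have hφinj : Function.Injective φ := by
    rw [← LinearMap.ker_eq_bot]
    rw [Submodule.eq_bot_iff]
    intro A hA
    have h1 : V * A = 0 := congrArg Prod.fst hA
    calc A = (V' * V) * A := by rw [hV', Matrix.one_mul]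
      _ = V' * (V * A) := Matrix.mul_assoc _ _ _
      _ = 0 := by rw [h1, Matrix.mul_zero]
  have hker_rank : Module.finrank ℝ (LinearMap.ker (factorizationDiff V W)) = r * r := by
    rw [hkerL, LinearMap.finrank_range_of_inj hφinj, Module.finrank_matrix]
    simp
  have hdom : Module.finrank ℝ
      (Matrix (Fin n₁) (Fin r) ℝ × Matrix (Fin n₂) (Fin r) ℝ) = n₁ * r + n₂ * r := by
    rw [Module.finrank_prod, Module.finrank_matrix, Module.finrank_matrix]
    simp
  have hrn := LinearMap.finrank_range_add_finrank_ker (factorizationDiff V W)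
  rw [hker_rank, hdom] at hrn
  obtain ⟨m, rfl⟩ := Nat.exists_eq_add_of_le hr₂
  have hgoal : r * (n₁ + (r + m) - r) = n₁ * r + m * r := by
    have : n₁ + (r + m) - r = n₁ + m := by omega
    rw [this]; ring
  rw [hgoal]
  have : n₁ * r + (r + m) * r = (n₁ * r + m * r) + r * r := by ring
  omega
end

section
/- Let r ≤ min{n₁, n₂}, let Ω ⊆ {1, …, n₁} × {1, …, n₂}, and let ℒ = {X ∈ ℝ^{n₁×n₂} : X_{ij} = 0 for all (i, j) ∈ Ω}. Suppose there exist matrices V* ∈ ℝ^{n₁×r} and W* ∈ ℝ^{n₂×r} of full column rank r such that the tangent space T = {HW*ᵀ + V*Kᵀ : H ∈ ℝ^{n₁×r}, K ∈ ℝ^{n₂×r}} satisfies T ∩ ℒ = {0}. Then the characteristic rank 𝔯 of the map G(V, W, Z) = VWᵀ + Z (over full-column-rank pairs (V, W) and Z ∈ ℒ) equals r(n₁ + n₂ − r) + n₁n₂ − |Ω|, i.e., equality holds in the bound 𝔯 ≤ r(n₁ + n₂ − r) + n₁n₂ − |Ω|. -/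
/-- The subspace `ℒ = {X : X_{ij} = 0 for (i,j) ∈ Ω}` of matrices vanishing on the
observed index set `Ω`. -/
def obsNullSpace {n₁ n₂ : ℕ} (Ω : Finset (Fin n₁ × Fin n₂)) :
    Submodule ℝ (Matrix (Fin n₁) (Fin n₂) ℝ) where
  carrier := {X | ∀ p ∈ Ω, X p.1 p.2 = 0}
  add_mem' := by
    intro a b ha hb p hp
    simp [Matrix.add_apply, ha p hp, hb p hp]
  zero_mem' := by intro p hp; simp
  smul_mem' := by
    intro c a ha p hp
    simp [Matrix.smul_apply, ha p hp]

open Module Matrix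

section FullColumnRank

variable {m n K : Type*} [Fintype m] [Fintype n] [DecidableEq n] [Field K]

theorem Matrix.isUnit_of_rank_eq_card {A : Matrix n n K} (hA : A.rank = Fintype.card n) :
    IsUnit A := by
  refine mulVec_surjective_iff_isUnit.mp ((LinearMap.range_eq_top (f := A.mulVecLin)).mp ?_)
  exact Submodule.eq_top_of_finrank_eq (by simpa [rank] using hA)

theorem Matrix.exists_mul_eq_one_of_rank_eq_card [LinearOrder K] [IsStrictOrderedRing K]
    {V : Matrix m n K} (hV : V.rank = Fintype.card n) : ∃ L : Matrix n m K, L * V = 1 := by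
  have hunit : IsUnit (Vᵀ * V) := isUnit_of_rank_eq_card (by rw [rank_transpose_mul_self, hV])
  refine ⟨(Vᵀ * V)⁻¹ * Vᵀ, ?_⟩
  rw [Matrix.mul_assoc, nonsing_inv_mul _ ((isUnit_iff_isUnit_det _).mp hunit)]

end FullColumnRank

section Factorization

variable {n₁ n₂ r : ℕ} (V : Matrix (Fin n₁) (Fin r) ℝ) (W : Matrix (Fin n₂) (Fin r) ℝ)

theorem factorizationDiff_apply (p : Matrix (Fin n₁) (Fin r) ℝ × Matrix (Fin n₂) (Fin r) ℝ) :
    factorizationDiff V W p = p.1 * Wᵀ + V * p.2ᵀ :=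
  rfl

/-- Derivative at `A = 0` of the reparametrization `(V, W) ↦ (V (1 + A), W (1 + A)⁻ᵀ)`, which
leaves `V Wᵀ` unchanged. -/
def factorizationSymmetry :
    Matrix (Fin r) (Fin r) ℝ →ₗ[ℝ] Matrix (Fin n₁) (Fin r) ℝ × Matrix (Fin n₂) (Fin r) ℝ where
  toFun A := (V * A, -(W * Aᵀ))
  map_add' A B := by
    simp only [Matrix.mul_add, transpose_add, neg_add, Prod.mk_add_mk]
  map_smul' c A := by
    simp [Matrix.mul_smul, transpose_smul]

variable {V W}

theorem factorizationSymmetry_injective (hV : V.rank = r) :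
    Function.Injective (factorizationSymmetry V W) := by
  obtain ⟨L, hL⟩ := exists_mul_eq_one_of_rank_eq_card (hV.trans (Fintype.card_fin r).symm)
  intro A B hAB
  simpa [factorizationSymmetry, ← Matrix.mul_assoc, hL] using congrArg (L * ·.1) hAB

theorem ker_factorizationDiff (hV : V.rank = r) (hW : W.rank = r) :
    LinearMap.ker (factorizationDiff V W) = LinearMap.range (factorizationSymmetry V W) := by
  obtain ⟨L, hL⟩ := exists_mul_eq_one_of_rank_eq_card (hV.trans (Fintype.card_fin r).symm)
  obtain ⟨P, hP⟩ := exists_mul_eq_one_of_rank_eq_card (hW.trans (Fintype.card_fin r).symm)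
  refine le_antisymm ?_ ?_
  · rintro ⟨H, K⟩ hHK
    rw [LinearMap.mem_ker, factorizationDiff_apply] at hHK
    dsimp only at hHK
    set A := -(Kᵀ * Pᵀ)
    have hH : H = V * A := by
      calc H = H * (P * W)ᵀ := by rw [hP, transpose_one, Matrix.mul_one]
        _ = (H * Wᵀ) * Pᵀ := by rw [transpose_mul, Matrix.mul_assoc]
        _ = V * A := by rw [eq_neg_of_add_eq_zero_left hHK]; simp [A, Matrix.mul_assoc]
    have hKt : Kᵀ = -(A * Wᵀ) := by
      have hVK : V * (A * Wᵀ + Kᵀ) = 0 := by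
        rw [Matrix.mul_add, ← Matrix.mul_assoc, ← hH, hHK]
      rw [eq_neg_iff_add_eq_zero, add_comm]
      simpa only [← Matrix.mul_assoc, hL, Matrix.one_mul, Matrix.mul_zero] using
        congrArg (L * ·) hVK
    have hK : K = -(W * Aᵀ) := by simpa [transpose_mul] using congrArg transpose hKt
    exact ⟨A, by simp [factorizationSymmetry, hH, hK]⟩
  · rintro _ ⟨A, rfl⟩
    simp [factorizationDiff_apply, factorizationSymmetry, transpose_mul, Matrix.mul_assoc]

theorem finrank_range_factorizationDiff (hV : V.rank = r) (hW : W.rank = r) :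
    finrank ℝ (LinearMap.range (factorizationDiff V W)) = r * (n₁ + n₂ - r) := by
  have hrank_nullity := LinearMap.finrank_range_add_finrank_ker (factorizationDiff V W)
  rw [ker_factorizationDiff hV hW, LinearMap.finrank_range_of_inj
    (factorizationSymmetry_injective hV)] at hrank_nullity
  simp only [finrank_prod, finrank_matrix, finrank_self, Fintype.card_fin] at hrank_nullity
  rw [Nat.mul_sub, Nat.mul_add]
  exact Nat.eq_sub_of_add_eq (by linarith)

end Factorization

theorem finrank_obsNullSpace {n₁ n₂ : ℕ} (Ω : Finset (Fin n₁ × Fin n₂)) :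
    finrank ℝ (obsNullSpace Ω) = n₁ * n₂ - Ω.card := by
  classical
  let restrict : Matrix (Fin n₁) (Fin n₂) ℝ →ₗ[ℝ] (Ω → ℝ) :=
    LinearMap.pi fun p => entryLinearMap ℝ ℝ p.1.1 p.1.2
  have hker : LinearMap.ker restrict = obsNullSpace Ω := by
    ext X
    simp [restrict, obsNullSpace, funext_iff]
  have hsurj : Function.Surjective restrict := fun f =>
    ⟨of fun i j => if h : (i, j) ∈ Ω then f ⟨(i, j), h⟩ else 0, funext fun p => by simp [restrict]⟩
  have hrank_nullity := LinearMap.finrank_range_add_finrank_ker restrict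
  rw [LinearMap.range_eq_top.mpr hsurj, finrank_top, hker] at hrank_nullity
  simp only [finrank_fintype_fun_eq_card, Fintype.card_coe, finrank_matrix, finrank_self,
    Fintype.card_fin, Nat.mul_one] at hrank_nullity
  omega

theorem characteristicRank_matrixCompletion_general {n₁ n₂ r : ℕ}
    (Ω : Finset (Fin n₁ × Fin n₂))
    (hwp : ∃ (Vstar : Matrix (Fin n₁) (Fin r) ℝ) (Wstar : Matrix (Fin n₂) (Fin r) ℝ),
      Vstar.rank = r ∧ Wstar.rank = r ∧
      LinearMap.range (factorizationDiff Vstar Wstar) ⊓ obsNullSpace Ω = ⊥) :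
    IsGreatest
      {t : ℕ | ∃ (V : Matrix (Fin n₁) (Fin r) ℝ) (W : Matrix (Fin n₂) (Fin r) ℝ),
        V.rank = r ∧ W.rank = r ∧
        t = Module.finrank ℝ
          ↥(LinearMap.range (factorizationDiff V W) ⊔ obsNullSpace Ω)}
      (r * (n₁ + n₂ - r) + (n₁ * n₂ - Ω.card)) := by
  have hdim {V : Matrix (Fin n₁) (Fin r) ℝ} {W : Matrix (Fin n₂) (Fin r) ℝ}
      (hV : V.rank = r) (hW : W.rank = r) :
      finrank ℝ (LinearMap.range (factorizationDiff V W)) + finrank ℝ (obsNullSpace Ω) =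
        r * (n₁ + n₂ - r) + (n₁ * n₂ - Ω.card) := by
    rw [finrank_range_factorizationDiff hV hW, finrank_obsNullSpace]
  obtain ⟨V₀, W₀, hV₀, hW₀, htransversal⟩ := hwp
  refine ⟨⟨V₀, W₀, hV₀, hW₀, ?_⟩, ?_⟩
  · rw [← hdim hV₀ hW₀, ← Submodule.finrank_sup_add_finrank_inf_eq, htransversal, finrank_bot,
      Nat.add_zero]
  · rintro _ ⟨V, W, hV, hW, rfl⟩
    exact hdim hV hW ▸ Submodule.finrank_add_le_finrank_add_finrank _ _

/-- For noisy matrix completion with observation set `Ω`, if there is a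
full-column-rank pair `(V*, W*)` whose tangent space `T = {H W*ᵀ + V* Kᵀ}` satisfies
`T ∩ ℒ = {0}`, then the characteristic rank of `G(V, W, Z) = V Wᵀ + Z` (maximum over
full-column-rank pairs `(V, W)` of the dimension of `T(V,W) + ℒ`) equals
`r(n₁ + n₂ − r) + n₁n₂ − |Ω|`. -/
theorem characteristicRank_matrixCompletion {n₁ n₂ r : ℕ} (hr₁ : r ≤ n₁) (hr₂ : r ≤ n₂)
    (Ω : Finset (Fin n₁ × Fin n₂))
    (hwp : ∃ (Vstar : Matrix (Fin n₁) (Fin r) ℝ) (Wstar : Matrix (Fin n₂) (Fin r) ℝ),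
      Vstar.rank = r ∧ Wstar.rank = r ∧
      LinearMap.range (factorizationDiff Vstar Wstar) ⊓ obsNullSpace Ω = ⊥) :
    IsGreatest
      {t : ℕ | ∃ (V : Matrix (Fin n₁) (Fin r) ℝ) (W : Matrix (Fin n₂) (Fin r) ℝ),
        V.rank = r ∧ W.rank = r ∧
        t = Module.finrank ℝ
          ↥(LinearMap.range (factorizationDiff V W) ⊔ obsNullSpace Ω)}
      (r * (n₁ + n₂ - r) + (n₁ * n₂ - Ω.card)) :=
  characteristicRank_matrixCompletion_general Ω hwp
end
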